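/- Let B, C, D be n×n Hermitian matrices with B positive semidefinite and nonzero, C positive semidefinite, and D positive definite. Define μ₊(M, B) = inf{x^H M x : x^H B x = 1}. Then for any α > 1, μ₊(C + αD, B) > μ₊(C + D, B). -/

import Mathlib

/-!
On the constraint set `x^H B x = 1` the form of `D` is bounded below by some `δ > 0`: in the
Loewner order `B ≤ s • 1` and `r • 1 ≤ D` with `r > 0`, so `1 ≤ s ‖x‖²` and `x^H D x ≥ r ‖x‖²`.
Writing `C + αD = (C + D) + (α - 1)D`, every value in the infimum defining `μ₊(C + αD, B)`
exceeds `μ₊(C + D, B)` by at least `(α - 1)δ`.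
-/

open Matrix ComplexOrder

noncomputable def quadForm {n : ℕ} (A : Matrix (Fin n) (Fin n) ℂ) (x : Fin n → ℂ) : ℝ :=
  (star x ⬝ᵥ A.mulVec x).re

noncomputable def muPlus {n : ℕ} (A B : Matrix (Fin n) (Fin n) ℂ) : ℝ :=
  sInf {r : ℝ | ∃ x : Fin n → ℂ, quadForm B x = 1 ∧ quadForm A x = r}

open scoped MatrixOrder

namespace Matrix

variable {𝕜 ι : Type*} [RCLike 𝕜] [Fintype ι] [DecidableEq ι]

theorem PosDef.exists_pos_algebraMap_le {D : Matrix ι ι 𝕜} (hD : D.PosDef) :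
    ∃ r > 0, algebraMap ℝ _ r ≤ D := by
  cases subsingleton_or_nontrivial (Matrix ι ι 𝕜)
  · exact ⟨1, one_pos, (Subsingleton.elim _ _).le⟩
  rw [CFC.exists_pos_algebraMap_le_iff hD.isHermitian.isSelfAdjoint]
  exact fun x hx => (isStrictlyPositive_iff_posDef.mpr hD).spectrum_pos hx

theorem IsHermitian.exists_le_algebraMap {B : Matrix ι ι 𝕜} (hB : B.IsHermitian) :
    ∃ s : ℝ, B ≤ algebraMap ℝ _ s := by
  obtain ⟨s, hs⟩ := B.finite_real_spectrum.bddAbove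
  exact ⟨s, (le_algebraMap_iff_spectrum_le hB.isSelfAdjoint).mpr hs⟩

end Matrix

section quadForm

variable {n : ℕ}

theorem quadForm_add (A A' : Matrix (Fin n) (Fin n) ℂ) (x : Fin n → ℂ) :
    quadForm (A + A') x = quadForm A x + quadForm A' x := by
  simp [quadForm, add_mulVec, dotProduct_add]

theorem quadForm_sub (A A' : Matrix (Fin n) (Fin n) ℂ) (x : Fin n → ℂ) :
    quadForm (A - A') x = quadForm A x - quadForm A' x := by
  simp [quadForm, sub_mulVec, dotProduct_sub]

theorem quadForm_ofReal_smul (r : ℝ) (A : Matrix (Fin n) (Fin n) ℂ) (x : Fin n → ℂ) :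
    quadForm ((r : ℂ) • A) x = r * quadForm A x := by
  simp [quadForm, smul_mulVec, dotProduct_smul]

theorem quadForm_smul_ofReal (A : Matrix (Fin n) (Fin n) ℂ) (r : ℝ) (x : Fin n → ℂ) :
    quadForm A ((r : ℂ) • x) = r ^ 2 * quadForm A x := by
  simp only [quadForm, Complex.coe_smul, star_smul, star_trivial, mulVec_smul, smul_dotProduct,
    dotProduct_smul, smul_smul, Complex.smul_re, smul_eq_mul, sq]

theorem quadForm_algebraMap (r : ℝ) (x : Fin n → ℂ) :
    quadForm (algebraMap ℝ _ r) x = r * quadForm 1 x := by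
  rw [Algebra.algebraMap_eq_smul_one, ← Complex.coe_smul, quadForm_ofReal_smul]

theorem Matrix.PosSemidef.quadForm_nonneg {A : Matrix (Fin n) (Fin n) ℂ} (hA : A.PosSemidef)
    (x : Fin n → ℂ) : 0 ≤ quadForm A x := by
  simpa [quadForm] using hA.re_dotProduct_nonneg x

theorem quadForm_mono {A A' : Matrix (Fin n) (Fin n) ℂ} (h : A ≤ A') (x : Fin n → ℂ) :
    quadForm A x ≤ quadForm A' x :=
  sub_nonneg.mp (quadForm_sub A' A x ▸ PosSemidef.quadForm_nonneg (le_iff.mp h) x)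

end quadForm

theorem Matrix.PosSemidef.exists_quadForm_eq_one {n : ℕ} {B : Matrix (Fin n) (Fin n) ℂ}
    (hB : B.PosSemidef) (hB0 : B ≠ 0) : ∃ x, quadForm B x = 1 := by
  obtain ⟨x, hx⟩ : ∃ x, quadForm B x ≠ 0 := by
    by_contra! h
    refine hB0 (ext_of_mulVec_single fun i => ?_)
    rw [zero_mulVec, ← hB.dotProduct_mulVec_zero_iff]
    have hnonneg := hB.dotProduct_mulVec_nonneg (Pi.single i 1)
    exact Complex.ext (h _) (Complex.nonneg_iff.mp hnonneg).2.symm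
  have hpos : 0 < quadForm B x := (hB.quadForm_nonneg x).lt_of_ne' hx
  refine ⟨((√(quadForm B x)⁻¹ : ℝ) : ℂ) • x, ?_⟩
  rw [quadForm_smul_ofReal, Real.sq_sqrt (inv_nonneg.mpr hpos.le), inv_mul_cancel₀ hx]

theorem exists_pos_le_quadForm_of_quadForm_eq_one {n : ℕ} {B D : Matrix (Fin n) (Fin n) ℂ}
    (hB : B.IsHermitian) (hD : D.PosDef) :
    ∃ δ > 0, ∀ x, quadForm B x = 1 → δ ≤ quadForm D x := by
  obtain ⟨r, hr, hrD⟩ := hD.exists_pos_algebraMap_le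
  obtain ⟨s, hBs⟩ := hB.exists_le_algebraMap
  refine ⟨r / max s 1, by positivity, fun x hx => ?_⟩
  have hnorm : 0 ≤ quadForm 1 x := PosSemidef.one.quadForm_nonneg x
  have hupper : 1 ≤ max s 1 * quadForm 1 x := calc
    1 = quadForm B x := hx.symm
    _ ≤ s * quadForm 1 x := quadForm_algebraMap s x ▸ quadForm_mono hBs x
    _ ≤ max s 1 * quadForm 1 x := by gcongr; exact le_max_left s 1
  calc r / max s 1 ≤ r * quadForm 1 x := by
        rw [div_le_iff₀ (by positivity), mul_assoc, mul_comm (quadForm 1 x)]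
        exact le_mul_of_one_le_right hr.le hupper
    _ ≤ quadForm D x := quadForm_algebraMap r x ▸ quadForm_mono hrD x

theorem muPlus_add_le {n : ℕ} {A B E : Matrix (Fin n) (Fin n) ℂ} {δ : ℝ} (hA : A.PosSemidef)
    (hB : ∃ x, quadForm B x = 1) (hE : ∀ x, quadForm B x = 1 → δ ≤ quadForm E x) :
    muPlus A B + δ ≤ muPlus (A + E) B := by
  obtain ⟨x₀, hx₀⟩ := hB
  have hbdd : BddBelow {r | ∃ x, quadForm B x = 1 ∧ quadForm A x = r} :=
    ⟨0, by rintro _ ⟨x, -, rfl⟩; exact hA.quadForm_nonneg x⟩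
  refine le_csInf ⟨_, x₀, hx₀, rfl⟩ ?_
  rintro _ ⟨x, hx, rfl⟩
  rw [quadForm_add]
  exact add_le_add (csInf_le hbdd ⟨x, hx, rfl⟩) (hE x hx)

theorem stmt5 {n : ℕ} (B C D : Matrix (Fin n) (Fin n) ℂ)
    (hB : B.PosSemidef) (hB0 : B ≠ 0) (hC : C.PosSemidef) (hD : D.PosDef)
    (α : ℝ) (hα : 1 < α) :
    muPlus (C + D) B < muPlus (C + (α : ℂ) • D) B := by
  obtain ⟨δ, hδ, hDδ⟩ := exists_pos_le_quadForm_of_quadForm_eq_one hB.isHermitian hD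
  have hsplit : C + (α : ℂ) • D = (C + D) + ((α - 1 : ℝ) : ℂ) • D := by
    push_cast
    module
  have hgain : ∀ x, quadForm B x = 1 → (α - 1) * δ ≤ quadForm (((α - 1 : ℝ) : ℂ) • D) x :=
    fun x hx => quadForm_ofReal_smul (α - 1) D x ▸
      mul_le_mul_of_nonneg_left (hDδ x hx) (sub_nonneg.mpr hα.le)
  calc muPlus (C + D) B < muPlus (C + D) B + (α - 1) * δ := by
        linarith [mul_pos (sub_pos.mpr hα) hδ]
    _ ≤ muPlus (C + (α : ℂ) • D) B := hsplit ▸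
        muPlus_add_le (hC.add hD.posSemidef) (hB.exists_quadForm_eq_one hB0) hgain
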